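/- Let n ≥ 1, s ≥ 1, and let k_1,…,k_s ∈ [n] be pairwise distinct. Then every characteristic vector a_S (S ⊆ [n]) satisfies ∑_{i=1}^s (a_S)_{k_i} − ∑_{1 ≤ i < j ≤ s} (a_S)_{k_i k_j} ≤ 1, and consequently every point x ∈ m·P(K_n) satisfies ∑_{i=1}^s x_{k_i} − ∑_{1 ≤ i < j ≤ s} x_{k_i k_j} ≤ m. -/

import Mathlib

/-!
If `c` of the `k_i` lie in `S`, the clique functional takes the value `c - c(c-1)/2` at `a_S`
(the edge sum is read off from `(∑ (a_S)_{k_i})² = c + 2 ∑_{i<j} (a_S)_{k_i k_j}`), and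
`1 - (c - c(c-1)/2) = (c-1)(c-2)/2 ≥ 0` for every natural number `c`. The functional is linear,
so the bound passes to the convex hull `P(K_n)` and scales to `m` on `m·P(K_n)`.
-/

/-- Edges of the complete graph `K_n`: 2-element subsets of `Fin n`,
encoded as non-diagonal elements of `Sym2 (Fin n)`. -/
abbrev EdgeKn (n : ℕ) : Type := {e : Sym2 (Fin n) // ¬ e.IsDiag}

/-- Coordinates of `ℝ^d`, `d = n + n(n-1)/2`: vertices and edges of `K_n`. -/
abbrev CoordKn (n : ℕ) : Type := Fin n ⊕ EdgeKn n

/-- The edge coordinate `{i,j}` for distinct `i, j`. -/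
def edgeCoord {n : ℕ} (i j : Fin n) (h : i ≠ j) : CoordKn n :=
  Sum.inr ⟨s(i, j), fun hd => h (Sym2.mk_isDiag_iff.mp hd)⟩

/-- The characteristic vector `a_S` of `S ⊆ [n]`. -/
def charVec {n : ℕ} (S : Finset (Fin n)) : CoordKn n → ℝ
  | Sum.inl i => if i ∈ S then 1 else 0
  | Sum.inr e => Sym2.lift ⟨fun i j => if i ∈ S ∧ j ∈ S then (1 : ℝ) else 0,
      fun i j => by simp [and_comm]⟩ e.1

/-- The standard inner product on `ℝ^d`. -/
def dotP {n : ℕ} (x y : CoordKn n → ℝ) : ℝ := ∑ c, x c * y c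

/-- `S` is in the demand set `D(w, p)`: it maximizes `⟨w - p, a_T⟩` over all `T ⊆ [n]`. -/
def InDemand {n : ℕ} (w p : CoordKn n → ℝ) (S : Finset (Fin n)) : Prop :=
  ∀ T : Finset (Fin n),
    dotP (fun c => w c - p c) (charVec T) ≤ dotP (fun c => w c - p c) (charVec S)

/-- The correlation polytope `P(K_n)`. -/
def corrPolytope (n : ℕ) : Set (CoordKn n → ℝ) :=
  convexHull ℝ (Set.range (charVec (n := n)))

/-- The dilate `m·A` of a set `A ⊆ ℝ^d`. -/
def dilate {n : ℕ} (m : ℕ) (A : Set (CoordKn n → ℝ)) : Set (CoordKn n → ℝ) :=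
  {x | ∃ y ∈ A, x = (m : ℝ) • y}

/-- `F` is a face of `P(K_n)`: the set of maximizers of some linear functional `⟨c, ·⟩`. -/
def IsFaceOf {n : ℕ} (F : Set (CoordKn n → ℝ)) : Prop :=
  ∃ c : CoordKn n → ℝ,
    F = {x | x ∈ corrPolytope n ∧ ∀ y ∈ corrPolytope n, dotP c y ≤ dotP c x}

open Finset

theorem sq_sum_eq_sum_sq_add_two_mul_sum_lt {ι R : Type*} [Fintype ι] [LinearOrder ι]
    [CommSemiring R] (f : ι → R) :
    (∑ i, f i) ^ 2 = ∑ i, f i ^ 2 + 2 * ∑ i, ∑ j, if i < j then f i * f j else 0 := by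
  have hsplit : ∀ i j, f i * f j = ((if i < j then f i * f j else 0) +
      (if j < i then f j * f i else 0)) + if i = j then f i ^ 2 else 0 := by
    intro i j
    rcases lt_trichotomy i j with h | rfl | h
    · simp [h, h.not_gt, h.ne]
    · simp only [lt_irrefl, if_false, if_true, zero_add, sq]
    · simp [h, h.not_gt, h.ne', mul_comm]
  rw [sq, sum_mul_sum, sum_congr rfl fun i _ => sum_congr rfl fun j _ => hsplit i j]
  simp only [sum_add_distrib]
  rw [sum_comm (f := fun i j => if j < i then f j * f i else 0)]
  simp only [sum_ite_eq, mem_univ, if_true]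
  ring

theorem Nat.cast_sub_one_mul_cast_sub_two_nonneg {R : Type*} [CommRing R] [LinearOrder R]
    [IsStrictOrderedRing R] (c : ℕ) : 0 ≤ ((c : R) - 1) * ((c : R) - 2) := by
  rcases c with _ | _ | c
  · norm_num
  · norm_num
  · push_cast
    ring_nf
    positivity

theorem charVec_inl {n : ℕ} (S : Finset (Fin n)) (i : Fin n) :
    charVec S (Sum.inl i) = if i ∈ S then 1 else 0 := rfl

theorem charVec_edgeCoord {n : ℕ} (S : Finset (Fin n)) (i j : Fin n) (h : i ≠ j) :
    charVec S (edgeCoord i j h) = charVec S (Sum.inl i) * charVec S (Sum.inl j) := by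
  simp only [charVec, edgeCoord, Sym2.lift_mk]
  split_ifs <;> simp_all

section CliqueForm

variable {n s : ℕ} (k : Fin s → Fin n) (hk : Function.Injective k)

noncomputable def cliqueForm : (CoordKn n → ℝ) →ₗ[ℝ] ℝ where
  toFun x := (∑ i, x (Sum.inl (k i))) -
    ∑ i : Fin s, ∑ j : Fin s,
      if h : i < j then x (edgeCoord (k i) (k j) fun he => (ne_of_lt h) (hk he)) else 0
  map_add' x y := by
    simp only [Pi.add_apply]
    rw [sub_add_sub_comm, ← sum_add_distrib, ← sum_add_distrib]
    congr 1
    refine sum_congr rfl fun i _ => ?_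
    rw [← sum_add_distrib]
    exact sum_congr rfl fun j _ => by split_ifs <;> simp
  map_smul' c x := by
    simp only [Pi.smul_apply, smul_eq_mul, RingHom.id_apply]
    rw [mul_sub, mul_sum, mul_sum]
    congr 1
    refine sum_congr rfl fun i _ => ?_
    rw [mul_sum]
    exact sum_congr rfl fun j _ => by split_ifs <;> simp

theorem cliqueForm_charVec (S : Finset (Fin n)) :
    cliqueForm k hk (charVec S) = (∑ i, charVec S (Sum.inl (k i))) -
      ∑ i : Fin s, ∑ j : Fin s,
        if i < j then charVec S (Sum.inl (k i)) * charVec S (Sum.inl (k j)) else 0 := by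
  simp [cliqueForm, charVec_edgeCoord]

theorem cliqueForm_charVec_le_one (S : Finset (Fin n)) : cliqueForm k hk (charVec S) ≤ 1 := by
  set f : Fin s → ℝ := fun i => charVec S (Sum.inl (k i))
  have hf : ∀ i, f i ^ 2 = f i := fun i => by
    simp only [f, charVec_inl]
    split_ifs <;> norm_num
  have hcard : ∑ i, f i = #{i | k i ∈ S} := by
    simp [f, charVec_inl, sum_boole]
  have hsq := sq_sum_eq_sum_sq_add_two_mul_sum_lt f
  simp only [hf] at hsq
  rw [cliqueForm_charVec, hcard]
  rw [hcard] at hsq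
  nlinarith [Nat.cast_sub_one_mul_cast_sub_two_nonneg (R := ℝ) #{i | k i ∈ S}]

theorem cliqueForm_le_one_of_mem_corrPolytope {x : CoordKn n → ℝ} (hx : x ∈ corrPolytope n) :
    cliqueForm k hk x ≤ 1 :=
  convexHull_min (by rintro _ ⟨S, rfl⟩; exact cliqueForm_charVec_le_one k hk S)
    (convex_halfSpace_le (cliqueForm k hk).isLinear 1) hx

theorem cliqueForm_le_of_mem_dilate {m : ℕ} {x : CoordKn n → ℝ}
    (hx : x ∈ dilate m (corrPolytope n)) : cliqueForm k hk x ≤ m := by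
  obtain ⟨y, hy, rfl⟩ := hx
  rw [map_smul, smul_eq_mul]
  exact mul_le_of_le_one_right (Nat.cast_nonneg m) (cliqueForm_le_one_of_mem_corrPolytope k hk hy)

end CliqueForm

theorem stmt15_general (n s m : ℕ)
    (k : Fin s → Fin n) (hk : Function.Injective k) :
    (∀ S : Finset (Fin n),
      (∑ i, charVec S (Sum.inl (k i))) -
        (∑ i : Fin s, ∑ j : Fin s,
          if h : i < j then
            charVec S (edgeCoord (k i) (k j) fun he => (ne_of_lt h) (hk he))
          else 0) ≤ 1) ∧
    (∀ x ∈ dilate m (corrPolytope n),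
      (∑ i, x (Sum.inl (k i))) -
        (∑ i : Fin s, ∑ j : Fin s,
          if h : i < j then
            x (edgeCoord (k i) (k j) fun he => (ne_of_lt h) (hk he))
          else 0) ≤ (m : ℝ)) :=
  ⟨cliqueForm_charVec_le_one k hk, fun _ hx => cliqueForm_le_of_mem_dilate k hk hx⟩

/-- **The clique inequalities (vi')/(vi).** For pairwise distinct
`k_1, …, k_s ∈ [n]`, every characteristic vector `a_S` satisfies
`∑_i (a_S)_{k_i} - ∑_{i<j} (a_S)_{k_i k_j} ≤ 1`, and consequently every
`x ∈ m·P(K_n)` satisfies `∑_i x_{k_i} - ∑_{i<j} x_{k_i k_j} ≤ m`. -/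
theorem stmt15 (n s m : ℕ) (hn : 1 ≤ n) (hs : 1 ≤ s) (hm : 1 ≤ m)
    (k : Fin s → Fin n) (hk : Function.Injective k) :
    (∀ S : Finset (Fin n),
      (∑ i, charVec S (Sum.inl (k i))) -
        (∑ i : Fin s, ∑ j : Fin s,
          if h : i < j then
            charVec S (edgeCoord (k i) (k j) fun he => (ne_of_lt h) (hk he))
          else 0) ≤ 1) ∧
    (∀ x ∈ dilate m (corrPolytope n),
      (∑ i, x (Sum.inl (k i))) -
        (∑ i : Fin s, ∑ j : Fin s,
          if h : i < j then
            x (edgeCoord (k i) (k j) fun he => (ne_of_lt h) (hk he))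
          else 0) ≤ (m : ℝ)) :=
  stmt15_general n s m k hk
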